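/- Let κ ≥ 0, z ∈ ℂ with Im z ≥ 0 and s ∈ (0, 1). Then for every bounded Borel function f on the closed upper half-plane and every w ∈ ℂ with Im w ≥ 0: |(T_{κ,z,s} f)(w)| ≤ (4 · 2^{1−s/2} ‖ν‖_∞ K^{1−s} / (1 − s)) · sup |f|. -/

import Mathlib

open MeasureTheory Complex

/-- `φ⁺_{z,q}(w) = ½(−1/(w+(z−q₀)/√2) + (−1/(w+(z−q₁)/√2)))`; terms with vanishing
denominator are zero (automatic, since division by zero is zero). -/
noncomputable def phiPlus (z : ℂ) (q : ℝ × ℝ) (w : ℂ) : ℂ :=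
  (1 / 2) * (-1 / (w + (z - (q.1 : ℂ)) / (Real.sqrt 2 : ℂ))
    + -1 / (w + (z - (q.2 : ℂ)) / (Real.sqrt 2 : ℂ)))

/-- `φ⁻_{z,q}(w) = ½(−1/(w+(z−q₀)/√2) − (−1/(w+(z−q₁)/√2)))`. -/
noncomputable def phiMinus (z : ℂ) (q : ℝ × ℝ) (w : ℂ) : ℂ :=
  (1 / 2) * (-1 / (w + (z - (q.1 : ℂ)) / (Real.sqrt 2 : ℂ))
    - -1 / (w + (z - (q.2 : ℂ)) / (Real.sqrt 2 : ℂ)))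

/-- The transfer operator `T_{κ,z,s}` acting on bounded Borel functions on the closed upper
half-plane. -/
noncomputable def transferOpC (ν : ℝ → ℝ) (σ : Measure (ℝ × ℝ)) (κ : ℝ) (z : ℂ) (s : ℝ)
    (f : ℂ → ℂ) (w : ℂ) : ℂ :=
  ∫ p : ℝ × ℝ, (∫ r : ℝ, f (phiPlus z (r + κ * p.1, r + κ * p.2) w) *
    ((((‖phiPlus z (r + κ * p.1, r + κ * p.2) w‖) ^ s
      + (‖phiMinus z (r + κ * p.1, r + κ * p.2) w‖) ^ s) * ν r : ℝ) : ℂ)) ∂σ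

/-!
With `c = Re z + √2 Re w`, each term `-1/(w + (z - q)/√2)` has norm at most `√2 / |q - c|`,
because a complex number dominates its real part. Concavity and subadditivity of `x ↦ xˢ` then
give `‖φ⁺_{z,q}(w)‖ˢ + ‖φ⁻_{z,q}(w)‖ˢ ≤ 2^{1-s/2} (|q₀ - c|^{-s} + |q₁ - c|^{-s})`. After bounding
`f` by `B` and `ν` by `Cν`, the `r`-integral is dominated by two integrals of `|r - c'|^{-s}` over
`[-K, K]`, and such an integral is largest when `c'` is the midpoint, where it equals
`2K^{1-s}/(1-s)`. The resulting bound is uniform in `p`, so it survives integration against the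
probability measure `σ`.
-/

open Set intervalIntegral

namespace Real

lemma rpow_add_rpow_le_two_mul_rpow_half_add {p : ℝ} (hp0 : 0 ≤ p) (hp1 : p ≤ 1) {x y : ℝ}
    (hx : 0 ≤ x) (hy : 0 ≤ y) : x ^ p + y ^ p ≤ 2 * ((x + y) / 2) ^ p := by
  have h := (concaveOn_rpow hp0 hp1).2 (mem_Ici.2 hx) (mem_Ici.2 hy)
    (by norm_num : (0 : ℝ) ≤ 1 / 2) (by norm_num : (0 : ℝ) ≤ 1 / 2) (by norm_num)
  simp only [smul_eq_mul] at h
  rw [show 1 / 2 * x + 1 / 2 * y = (x + y) / 2 by ring] at h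
  linarith

lemma sub_rpow_le_two_mul_rpow_half {p : ℝ} (hp0 : 0 ≤ p) (hp1 : p ≤ 1) {a b : ℝ}
    (ha : 0 ≤ a) (hab : a ≤ b) : b ^ p - a ^ p ≤ 2 * ((b - a) / 2) ^ p := by
  have hsub : b ^ p ≤ a ^ p + (b - a) ^ p := by
    simpa using rpow_add_le_add_rpow ha (sub_nonneg.2 hab) hp0 hp1
  have hconc := rpow_add_rpow_le_two_mul_rpow_half_add hp0 hp1 le_rfl (sub_nonneg.2 hab)
  rw [zero_add] at hconc
  linarith [zero_rpow_nonneg p]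

lemma rpow_add_rpow_le_of_le_half_add {s : ℝ} (hs0 : 0 ≤ s) (hs1 : s ≤ 1) {a b x y : ℝ}
    (ha : 0 ≤ a) (hb : 0 ≤ b) (hx : 0 ≤ x) (hy : 0 ≤ y) (hax : a ≤ (x + y) / 2)
    (hbx : b ≤ (x + y) / 2) : a ^ s + b ^ s ≤ 2 ^ (1 - s) * (x ^ s + y ^ s) := by
  have hxy : 0 ≤ x + y := add_nonneg hx hy
  calc a ^ s + b ^ s ≤ 2 * ((x + y) / 2) ^ s := by
        linarith [rpow_le_rpow ha hax hs0, rpow_le_rpow hb hbx hs0]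
    _ = 2 ^ (1 - s) * (x + y) ^ s := by
        rw [div_rpow hxy zero_le_two, rpow_sub zero_lt_two, rpow_one]
        ring
    _ ≤ 2 ^ (1 - s) * (x ^ s + y ^ s) := by
        gcongr
        exact rpow_add_le_add_rpow hx hy hs0 hs1

lemma intervalIntegrable_abs_rpow {r : ℝ} (hr : -1 < r) (a b : ℝ) :
    IntervalIntegrable (fun t : ℝ => |t| ^ r) volume a b := by
  have hpos : ∀ c, 0 ≤ c → IntervalIntegrable (fun t : ℝ => |t| ^ r) volume 0 c := fun c hc =>
    (intervalIntegrable_rpow' hr).congr fun t ht => by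
      rw [uIoc_of_le hc] at ht
      simp [abs_of_pos ht.1]
  have hzero : ∀ c, IntervalIntegrable (fun t : ℝ => |t| ^ r) volume 0 c := by
    intro c
    rcases le_total 0 c with hc | hc
    · exact hpos c hc
    · simpa using (hpos (-c) (neg_nonneg.2 hc)).comp_sub_left 0
  exact (hzero a).symm.trans (hzero b)

lemma intervalIntegrable_abs_sub_rpow {r : ℝ} (hr : -1 < r) (c a b : ℝ) :
    IntervalIntegrable (fun t : ℝ => |t - c| ^ r) volume a b := by
  simpa using (intervalIntegrable_abs_rpow hr (a - c) (b - c)).comp_sub_right c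

lemma integral_zero_abs_rpow_neg_of_nonneg {s : ℝ} (hs : s < 1) {x : ℝ} (hx : 0 ≤ x) :
    ∫ t in (0 : ℝ)..x, |t| ^ (-s) = x ^ (1 - s) / (1 - s) := by
  have h : ∫ t in (0 : ℝ)..x, |t| ^ (-s) = ∫ t in (0 : ℝ)..x, t ^ (-s) :=
    integral_congr fun t ht => by
      rw [uIcc_of_le hx] at ht
      simp [abs_of_nonneg ht.1]
  rw [h, integral_rpow (Or.inl (by linarith)), zero_rpow (by linarith)]
  ring_nf

lemma integral_zero_abs_rpow_neg_of_nonpos {s : ℝ} (hs : s < 1) {x : ℝ} (hx : x ≤ 0) :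
    ∫ t in (0 : ℝ)..x, |t| ^ (-s) = -((-x) ^ (1 - s) / (1 - s)) := by
  have h := integral_comp_neg (a := 0) (b := -x) (fun t : ℝ => |t| ^ (-s))
  simp only [abs_neg, neg_neg, neg_zero] at h
  rw [integral_symm, ← h, integral_zero_abs_rpow_neg_of_nonneg hs (neg_nonneg.2 hx)]

lemma integral_abs_rpow_neg_le {s : ℝ} (hs0 : 0 ≤ s) (hs1 : s < 1) {a b : ℝ} (hab : a ≤ b) :
    ∫ t in a..b, |t| ^ (-s) ≤ 2 * ((b - a) / 2) ^ (1 - s) / (1 - s) := by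
  have hp : 0 < 1 - s := by linarith
  have hii := intervalIntegrable_abs_rpow (by linarith : -1 < -s)
  rw [← integral_interval_sub_left (hii 0 b) (hii 0 a), le_div_iff₀ hp]
  rcases le_total 0 a with ha | ha
  · rw [integral_zero_abs_rpow_neg_of_nonneg hs1 ha,
      integral_zero_abs_rpow_neg_of_nonneg hs1 (ha.trans hab)]
    field_simp
    exact sub_rpow_le_two_mul_rpow_half hp.le (by linarith) ha hab
  rcases le_total b 0 with hb | hb
  · rw [integral_zero_abs_rpow_neg_of_nonpos hs1 ha, integral_zero_abs_rpow_neg_of_nonpos hs1 hb]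
    field_simp
    have h := sub_rpow_le_two_mul_rpow_half hp.le (by linarith) (neg_nonneg.2 hb) (neg_le_neg hab)
    rw [neg_sub_neg] at h
    linarith
  · rw [integral_zero_abs_rpow_neg_of_nonneg hs1 hb, integral_zero_abs_rpow_neg_of_nonpos hs1 ha]
    field_simp
    have h := rpow_add_rpow_le_two_mul_rpow_half_add hp.le (by linarith) (neg_nonneg.2 ha) hb
    rw [neg_add_eq_sub] at h
    linarith

lemma integral_abs_sub_rpow_neg_le {s : ℝ} (hs0 : 0 ≤ s) (hs1 : s < 1) (c : ℝ) {a b : ℝ}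
    (hab : a ≤ b) :
    ∫ t in a..b, |t - c| ^ (-s) ≤ 2 * ((b - a) / 2) ^ (1 - s) / (1 - s) := by
  rw [integral_comp_sub_right (fun t => |t| ^ (-s))]
  simpa using integral_abs_rpow_neg_le hs0 hs1 (sub_le_sub_right hab c)

end Real

lemma Complex.im_neg_one_div_nonneg {d : ℂ} (hd : 0 ≤ d.im) : 0 ≤ (-1 / d).im := by
  rw [neg_div, one_div, neg_im, inv_im, neg_div, neg_neg]
  exact div_nonneg hd (normSq_nonneg d)

lemma re_add_sub_div_sqrt_two (z w : ℂ) (x : ℝ) :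
    (w + (z - x) / (Real.sqrt 2 : ℂ)).re = (z.re + Real.sqrt 2 * w.re - x) / Real.sqrt 2 := by
  have h2 : Real.sqrt 2 ≠ 0 := by positivity
  simp only [add_re, div_ofReal_re, sub_re, ofReal_re]
  field_simp
  ring

lemma im_add_sub_div_sqrt_two (z w : ℂ) (x : ℝ) :
    (w + (z - x) / (Real.sqrt 2 : ℂ)).im = w.im + z.im / Real.sqrt 2 := by
  simp [add_im, div_ofReal_im, sub_im, ofReal_im]

lemma im_phiPlus_nonneg {z w : ℂ} (hz : 0 ≤ z.im) (hw : 0 ≤ w.im) (q : ℝ × ℝ) :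
    0 ≤ (phiPlus z q w).im := by
  have hden : ∀ x : ℝ, 0 ≤ (w + (z - x) / (Real.sqrt 2 : ℂ)).im := fun x => by
    rw [im_add_sub_div_sqrt_two]
    positivity
  have h1 := im_neg_one_div_nonneg (hden q.1)
  have h2 := im_neg_one_div_nonneg (hden q.2)
  rw [phiPlus, mul_im, add_im]
  norm_num
  linarith

lemma norm_neg_one_div_le (z w : ℂ) {x : ℝ} (hx : x ≠ z.re + Real.sqrt 2 * w.re) :
    ‖-1 / (w + (z - x) / (Real.sqrt 2 : ℂ))‖
      ≤ Real.sqrt 2 / |x - (z.re + Real.sqrt 2 * w.re)| := by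
  set d := w + (z - x) / (Real.sqrt 2 : ℂ)
  have hre : |d.re| = |x - (z.re + Real.sqrt 2 * w.re)| / Real.sqrt 2 := by
    rw [re_add_sub_div_sqrt_two, abs_div, abs_of_pos (by positivity : 0 < Real.sqrt 2),
      abs_sub_comm]
  have hre0 : 0 < |d.re| := by
    rw [hre]
    exact div_pos (abs_pos.2 (sub_ne_zero.2 hx)) (by positivity)
  calc ‖-1 / d‖ = ‖d‖⁻¹ := by simp
    _ ≤ |d.re|⁻¹ := inv_anti₀ hre0 (abs_re_le_norm d)
    _ = _ := by rw [hre, inv_div]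

lemma norm_phiPlus_rpow_add_norm_phiMinus_rpow_le {s : ℝ} (hs0 : 0 ≤ s) (hs1 : s ≤ 1)
    (z w : ℂ) {q : ℝ × ℝ} (h1 : q.1 ≠ z.re + Real.sqrt 2 * w.re)
    (h2 : q.2 ≠ z.re + Real.sqrt 2 * w.re) :
    ‖phiPlus z q w‖ ^ s + ‖phiMinus z q w‖ ^ s ≤
      2 ^ (1 - s / 2) * (|q.1 - (z.re + Real.sqrt 2 * w.re)| ^ (-s)
        + |q.2 - (z.re + Real.sqrt 2 * w.re)| ^ (-s)) := by
  set c := z.re + Real.sqrt 2 * w.re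
  set u := -1 / (w + (z - q.1) / (Real.sqrt 2 : ℂ))
  set v := -1 / (w + (z - q.2) / (Real.sqrt 2 : ℂ))
  have hhalf : ‖(1 / 2 : ℂ)‖ = 1 / 2 := by simp
  have hplus : ‖phiPlus z q w‖ ≤ (‖u‖ + ‖v‖) / 2 := by
    rw [phiPlus, norm_mul, hhalf]
    linarith [norm_add_le u v]
  have hminus : ‖phiMinus z q w‖ ≤ (‖u‖ + ‖v‖) / 2 := by
    rw [phiMinus, norm_mul, hhalf]
    linarith [norm_sub_le u v]
  have hu := norm_neg_one_div_le z w h1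
  have hv := norm_neg_one_div_le z w h2
  have hpow : ∀ x : ℝ, (Real.sqrt 2 / |x|) ^ s = 2 ^ (s / 2) * |x| ^ (-s) := fun x => by
    rw [Real.div_rpow (Real.sqrt_nonneg 2) (abs_nonneg x), Real.sqrt_eq_rpow,
      ← Real.rpow_mul zero_le_two, Real.rpow_neg (abs_nonneg x), div_eq_mul_inv]
    ring_nf
  calc ‖phiPlus z q w‖ ^ s + ‖phiMinus z q w‖ ^ s
      ≤ 2 ^ (1 - s) * ((Real.sqrt 2 / |q.1 - c|) ^ s + (Real.sqrt 2 / |q.2 - c|) ^ s) :=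
        Real.rpow_add_rpow_le_of_le_half_add hs0 hs1 (norm_nonneg _) (norm_nonneg _)
          (by positivity) (by positivity) (by linarith) (by linarith)
    _ = 2 ^ (1 - s) * 2 ^ (s / 2) * (|q.1 - c| ^ (-s) + |q.2 - c| ^ (-s)) := by
        rw [hpow, hpow]
        ring
    _ = 2 ^ (1 - s / 2) * (|q.1 - c| ^ (-s) + |q.2 - c| ^ (-s)) := by
        rw [← Real.rpow_add zero_lt_two]
        ring_nf

lemma norm_integral_phiPlus_weighted_le {K : ℝ} (hK : 0 ≤ K) {ν : ℝ → ℝ}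
    (hνnonneg : ∀ q, 0 ≤ ν q) (hνsupp : ∀ q, q ∉ Icc (-K) K → ν q = 0) {Cν : ℝ}
    (hνbd : ∀ᵐ q : ℝ, ν q ≤ Cν) {z w : ℂ} (hz : 0 ≤ z.im) (hw : 0 ≤ w.im) {s : ℝ}
    (hs0 : 0 ≤ s) (hs1 : s < 1) {f : ℂ → ℂ} {B : ℝ} (hfB : ∀ w : ℂ, 0 ≤ w.im → ‖f w‖ ≤ B)
    (a b : ℝ) :
    ‖∫ r : ℝ, f (phiPlus z (r + a, r + b) w) *
      ((((‖phiPlus z (r + a, r + b) w‖) ^ s + (‖phiMinus z (r + a, r + b) w‖) ^ s) * ν r : ℝ)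
        : ℂ)‖ ≤ 4 * 2 ^ (1 - s / 2) * Cν * K ^ (1 - s) / (1 - s) * B := by
  set F : ℝ → ℂ := fun r => f (phiPlus z (r + a, r + b) w) *
    ((((‖phiPlus z (r + a, r + b) w‖) ^ s + (‖phiMinus z (r + a, r + b) w‖) ^ s) * ν r : ℝ) : ℂ)
  set c := z.re + Real.sqrt 2 * w.re
  have hB : 0 ≤ B := (norm_nonneg _).trans (hfB I (by simp))
  have hCν : 0 ≤ Cν := by
    obtain ⟨q, hq⟩ := hνbd.exists
    exact (hνnonneg q).trans hq
  set M := B * Cν * 2 ^ (1 - s / 2)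
  set g : ℝ → ℝ := fun r => M * (|r - (c - a)| ^ (-s) + |r - (c - b)| ^ (-s))
  have hg : IntervalIntegrable g volume (-K) K := by
    have hii := Real.intervalIntegrable_abs_sub_rpow (by linarith : -1 < -s)
    exact ((hii (c - a) _ _).add (hii (c - b) _ _)).const_mul M
  have hFg : ∀ᵐ r, r ∈ Ioc (-K) K → ‖F r‖ ≤ g r := by
    filter_upwards [Measure.ae_ne volume (c - a), Measure.ae_ne volume (c - b), hνbd]
      with r hra hrb hνr _
    have hφ : ‖phiPlus z (r + a, r + b) w‖ ^ s + ‖phiMinus z (r + a, r + b) w‖ ^ s ≤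
        2 ^ (1 - s / 2) * (|r + a - c| ^ (-s) + |r + b - c| ^ (-s)) :=
      norm_phiPlus_rpow_add_norm_phiMinus_rpow_le hs0 hs1.le z w
        (by dsimp only; contrapose! hra; linarith) (by dsimp only; contrapose! hrb; linarith)
    have hshift : ∀ d, r + d - c = r - (c - d) := fun d => by ring
    rw [hshift, hshift] at hφ
    have hX : 0 ≤ ‖phiPlus z (r + a, r + b) w‖ ^ s + ‖phiMinus z (r + a, r + b) w‖ ^ s := by
      positivity
    simp only [F, g]
    rw [norm_mul, norm_real, Real.norm_eq_abs, abs_of_nonneg (mul_nonneg hX (hνnonneg r))]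
    calc _ ≤ B * ((2 ^ (1 - s / 2) * (|r - (c - a)| ^ (-s) + |r - (c - b)| ^ (-s))) * Cν) :=
          mul_le_mul (hfB _ (im_phiPlus_nonneg hz hw _))
            (mul_le_mul hφ hνr (hνnonneg r) (by positivity)) (mul_nonneg hX (hνnonneg r)) hB
      _ = _ := by ring
  have hF : ∫ r, F r = ∫ r in (-K)..K, F r := by
    rw [integral_of_le (by linarith), ← integral_Icc_eq_integral_Ioc,
      setIntegral_eq_integral_of_forall_compl_eq_zero]
    intro r hr
    simp [F, hνsupp r hr]
  calc ‖∫ r, F r‖ ≤ ∫ r in (-K)..K, g r := hF ▸ norm_integral_le_of_norm_le (by linarith) hFg hg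
    _ = M * ((∫ r in (-K)..K, |r - (c - a)| ^ (-s)) + ∫ r in (-K)..K, |r - (c - b)| ^ (-s)) := by
        have hii := Real.intervalIntegrable_abs_sub_rpow (by linarith : -1 < -s)
        rw [intervalIntegral.integral_const_mul, integral_add (hii _ _ _) (hii _ _ _)]
    _ ≤ M * (2 * (2 * K ^ (1 - s) / (1 - s))) := by
        have hI := fun d => Real.integral_abs_sub_rpow_neg_le hs0 hs1 d (by linarith : -K ≤ K)
        simp only [sub_neg_eq_add, add_self_div_two] at hI
        gcongr
        linarith [hI (c - a), hI (c - b)]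
    _ = 4 * 2 ^ (1 - s / 2) * Cν * K ^ (1 - s) / (1 - s) * B := by ring

theorem transferOpC_bounded_general (K : ℝ) (hK : 0 < K) (ν : ℝ → ℝ)
    (hνnonneg : ∀ q, 0 ≤ ν q)
    (hνsupp : ∀ q, q ∉ Set.Icc (-K) K → ν q = 0)
    (Cν : ℝ) (hνbd : ∀ᵐ q : ℝ, ν q ≤ Cν)
    (σ : Measure (ℝ × ℝ)) [IsProbabilityMeasure σ]
    (κ : ℝ) (z : ℂ) (hz : 0 ≤ z.im) (s : ℝ) (hs0 : 0 < s) (hs1 : s < 1)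
    (f : ℂ → ℂ) (B : ℝ)
    (hfB : ∀ w : ℂ, 0 ≤ w.im → ‖f w‖ ≤ B) :
    ∀ w : ℂ, 0 ≤ w.im →
      ‖transferOpC ν σ κ z s f w‖ ≤
        (4 * (2 : ℝ) ^ (1 - s / 2) * Cν * K ^ (1 - s) / (1 - s)) * B := by
  intro w hw
  calc ‖transferOpC ν σ κ z s f w‖
      ≤ (4 * (2 : ℝ) ^ (1 - s / 2) * Cν * K ^ (1 - s) / (1 - s)) * B * σ.real univ :=
        norm_integral_le_of_norm_le_const <| ae_of_all _ fun p =>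
          norm_integral_phiPlus_weighted_le hK.le hνnonneg hνsupp hνbd hz hw hs0.le hs1 hfB _ _
    _ = (4 * (2 : ℝ) ^ (1 - s / 2) * Cν * K ^ (1 - s) / (1 - s)) * B := by simp

/-- Lemma 3.4(i) of the paper: uniform boundedness of the transfer operator,
`|(T_{κ,z,s} f)(w)| ≤ (4 · 2^{1−s/2} ‖ν‖_∞ K^{1−s}/(1−s)) · sup |f|`. -/
theorem transferOpC_bounded (K : ℝ) (hK : 0 < K) (ν : ℝ → ℝ)
    (hνmeas : Measurable ν) (hνnonneg : ∀ q, 0 ≤ ν q)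
    (hνsupp : ∀ q, q ∉ Set.Icc (-K) K → ν q = 0)
    (hνprob : ∫ q : ℝ, ν q = 1)
    (Cν : ℝ) (hνbd : ∀ᵐ q : ℝ, ν q ≤ Cν)
    (σ : Measure (ℝ × ℝ)) [IsProbabilityMeasure σ]
    (hσsupp : σ {p : ℝ × ℝ | ¬(|p.1| ≤ 1 ∧ |p.2| ≤ 1)} = 0)
    (κ : ℝ) (hκ : 0 ≤ κ) (z : ℂ) (hz : 0 ≤ z.im) (s : ℝ) (hs0 : 0 < s) (hs1 : s < 1)
    (f : ℂ → ℂ) (hfmeas : Measurable f) (B : ℝ)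
    (hfB : ∀ w : ℂ, 0 ≤ w.im → ‖f w‖ ≤ B) :
    ∀ w : ℂ, 0 ≤ w.im →
      ‖transferOpC ν σ κ z s f w‖ ≤
        (4 * (2 : ℝ) ^ (1 - s / 2) * Cν * K ^ (1 - s) / (1 - s)) * B :=
  transferOpC_bounded_general K hK ν hνnonneg hνsupp Cν hνbd σ κ z hz s hs0 hs1 f B hfB
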